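/- If {Pᵢ} is an increasing sequence and {Qᵢ} a decreasing sequence of quantum predicates (with respect to the Loewner order), then the pairwise supremum ⋁ᵢ(Pᵢ,Qᵢ) = (⋁ᵢPᵢ, ⋀ᵢQᵢ) exists with respect to the order ⊴; in particular ⋀ᵢQᵢ exists and equals I − ⋁ᵢ(I − Qᵢ). -/

import Mathlib

noncomputable def trR {E : Type*} [NormedAddCommGroup E] [InnerProductSpace ℂ E]
    {ι : Type*} (b : HilbertBasis ι ℂ E) (A : E →L[ℂ] E) : ℝ :=
  ∑' i, (inner ℂ (b i) (A (b i)) : ℂ).re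

def IsTraceClassDiag {E : Type*} [NormedAddCommGroup E] [InnerProductSpace ℂ E]
    {ι : Type*} (b : HilbertBasis ι ℂ E) (A : E →L[ℂ] E) : Prop :=
  Summable fun i => (inner ℂ (b i) (A (b i)) : ℂ).re

/-- The Loewner order: `A ⊑ B` iff `B - A` is a positive operator. -/
def Loe {E : Type*} [NormedAddCommGroup E] [InnerProductSpace ℂ E] [CompleteSpace E]
    (A B : E →L[ℂ] E) : Prop := (B - A).IsPositive

/-- A quantum predicate: `0 ⊑ P ⊑ I`. -/
def IsPredicate {E : Type*} [NormedAddCommGroup E] [InnerProductSpace ℂ E] [CompleteSpace E]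
    (P : E →L[ℂ] E) : Prop := P.IsPositive ∧ (1 - P).IsPositive

/-- Least upper bound of a sequence of operators in the Loewner order. -/
def IsLubSeq {E : Type*} [NormedAddCommGroup E] [InnerProductSpace ℂ E] [CompleteSpace E]
    (f : ℕ → E →L[ℂ] E) (S : E →L[ℂ] E) : Prop :=
  (∀ n, Loe (f n) S) ∧ ∀ T, (∀ n, Loe (f n) T) → Loe S T

/-- Greatest lower bound of a sequence of operators in the Loewner order. -/
def IsGlbSeq {E : Type*} [NormedAddCommGroup E] [InnerProductSpace ℂ E] [CompleteSpace E]
    (f : ℕ → E →L[ℂ] E) (S : E →L[ℂ] E) : Prop :=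
  (∀ n, Loe S (f n)) ∧ ∀ T, (∀ n, Loe T (f n)) → Loe T S

/-- The order `⊴` on pairs: `(P,Q) ⊴ (P',Q')` iff `P ⊑ P'` and `Q' ⊑ Q`. -/
def TLe {E : Type*} [NormedAddCommGroup E] [InnerProductSpace ℂ E] [CompleteSpace E]
    (x y : (E →L[ℂ] E) × (E →L[ℂ] E)) : Prop := Loe x.1 y.1 ∧ Loe y.2 x.2

/-- Least upper bound of a sequence of pairs w.r.t. `⊴`. -/
def IsLubPairSeq {E : Type*} [NormedAddCommGroup E] [InnerProductSpace ℂ E] [CompleteSpace E]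
    (f : ℕ → (E →L[ℂ] E) × (E →L[ℂ] E)) (S : (E →L[ℂ] E) × (E →L[ℂ] E)) : Prop :=
  (∀ n, TLe (f n) S) ∧ ∀ T, (∀ n, TLe (f n) T) → TLe S T

open Set

theorem isGLB_range_of_isLUB_range_sub_left {α ι : Type*} [AddCommGroup α] [PartialOrder α]
    [IsOrderedAddMonoid α] {f : ι → α} {a S : α} (h : IsLUB (range fun i => a - f i) S) :
    IsGLB (range f) (a - S) := by
  constructor
  · rintro _ ⟨i, rfl⟩
    exact sub_le_comm.mp (h.1 ⟨i, rfl⟩)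
  · intro T hT
    have hupper : a - T ∈ upperBounds (range fun i => a - f i) := by
      rintro _ ⟨i, rfl⟩
      exact sub_le_sub_left (hT ⟨i, rfl⟩) a
    exact le_sub_comm.mp (h.2 hupper)

section LoewnerOrder

variable {E : Type*} [NormedAddCommGroup E] [InnerProductSpace ℂ E] [CompleteSpace E]
  {f g : ℕ → E →L[ℂ] E} {S S' T : E →L[ℂ] E}

theorem loe_iff_le {A B : E →L[ℂ] E} : Loe A B ↔ A ≤ B :=
  (ContinuousLinearMap.le_def A B).symm

theorem isLubSeq_iff_isLUB : IsLubSeq f S ↔ IsLUB (range f) S := by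
  simp only [IsLubSeq, IsLUB, IsLeast, upperBounds, lowerBounds, loe_iff_le,
    forall_mem_range, mem_ofPred_eq]

theorem isGlbSeq_iff_isGLB : IsGlbSeq f S ↔ IsGLB (range f) S := by
  simp only [IsGlbSeq, IsGLB, IsGreatest, upperBounds, lowerBounds, loe_iff_le,
    forall_mem_range, mem_ofPred_eq]

theorem IsLubSeq.unique (h : IsLubSeq f S) (h' : IsLubSeq f S') : S = S' :=
  (isLubSeq_iff_isLUB.mp h).unique (isLubSeq_iff_isLUB.mp h')

theorem IsLubSeq.isGlbSeq_one_sub (h : IsLubSeq (fun n => 1 - f n) S) : IsGlbSeq f (1 - S) :=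
  isGlbSeq_iff_isGLB.mpr (isGLB_range_of_isLUB_range_sub_left (isLubSeq_iff_isLUB.mp h))

theorem isLubPairSeq_of_isLubSeq_of_isGlbSeq (hf : IsLubSeq f S) (hg : IsGlbSeq g T) :
    IsLubPairSeq (fun n => (f n, g n)) (S, T) :=
  ⟨fun n => ⟨hf.1 n, hg.1 n⟩,
    fun X hX => ⟨hf.2 X.1 fun n => (hX n).1, hg.2 X.2 fun n => (hX n).2⟩⟩

end LoewnerOrder

theorem stmt10 {E : Type*} [NormedAddCommGroup E] [InnerProductSpace ℂ E]
    [CompleteSpace E]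
    -- ω-completeness of the Loewner order on predicates: every increasing sequence of
    -- self-adjoint operators bounded above has a least upper bound.
    (hcpo : ∀ (f : ℕ → E →L[ℂ] E) (C : E →L[ℂ] E), (∀ n, IsSelfAdjoint (f n)) →
      (∀ n, Loe (f n) (f (n + 1))) → (∀ n, Loe (f n) C) → ∃ S, IsLubSeq f S)
    (P Q : ℕ → E →L[ℂ] E)
    (hP : ∀ n, IsPredicate (P n)) (hQ : ∀ n, IsPredicate (Q n))
    (hPmono : ∀ n, Loe (P n) (P (n + 1))) (hQanti : ∀ n, Loe (Q (n + 1)) (Q n)) :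
    ∃ S T : E →L[ℂ] E, IsLubSeq P S ∧ IsGlbSeq Q T ∧
      IsLubPairSeq (fun n => (P n, Q n)) (S, T) ∧
      ∀ S', IsLubSeq (fun n => 1 - Q n) S' → T = 1 - S' := by
  obtain ⟨S, hS⟩ := hcpo P 1 (fun n => (hP n).1.isSelfAdjoint) hPmono fun n => (hP n).2
  have hQc_mono : ∀ n, Loe (1 - Q n) (1 - Q (n + 1)) := fun n =>
    loe_iff_le.mpr (sub_le_sub_left (loe_iff_le.mp (hQanti n)) 1)
  have hQc_le_one : ∀ n, Loe (1 - Q n) 1 := fun n =>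
    loe_iff_le.mpr (sub_le_self 1 ((Q n).nonneg_iff_isPositive.mpr (hQ n).1))
  obtain ⟨S₀, hS₀⟩ := hcpo (fun n => 1 - Q n) 1 (fun n => (hQ n).2.isSelfAdjoint)
    hQc_mono hQc_le_one
  have hT : IsGlbSeq Q (1 - S₀) := hS₀.isGlbSeq_one_sub
  exact ⟨S, 1 - S₀, hS, hT, isLubPairSeq_of_isLubSeq_of_isGlbSeq hS hT,
    fun S' hS' => by rw [hS₀.unique hS']⟩
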